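/- Let a > 0 and let r_c > 0 be defined by sinh²r_c = 1. On the open set U = {(t,r,φ,z) ∈ ℝ⁴ : r > r_c} consider the Gödel metric with nonzero components g_{00} = a², g_{02} = g_{20} = a²·√2·sinh²r, g_{22} = a²·sinh²r·(sinh²r − 1), g_{11} = g_{33} = −a² (coordinates x⁰=t, x¹=r, x²=φ, x³=z), and the vector field v^μ = (0, 0, 1/(a sinh r √(sinh²r − 1)), 0). Then: (i) Σ_{μ,ν} g_{μν} v^μ v^ν = 1; and (ii) the acceleration a_μ = Σ_ν v^ν (∂_ν v_μ − Σ_ε Γ^ε_{μν} v_ε) equals (0, −cosh r (2 sinh²r − 1)/(sinh r (sinh²r − 1)), 0, 0), which is the gradient ∂_μ Ψ of Ψ = −ln(sinh r · √(sinh²r − 1)). -/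

import Mathlib

open scoped BigOperators

/-- Partial derivative with respect to the μ-th coordinate of ℝ⁴. -/
noncomputable def pd (μ : Fin 4) (f : (Fin 4 → ℝ) → ℝ) (x : Fin 4 → ℝ) : ℝ :=
  fderiv ℝ f x (Pi.single μ 1)

/-- Christoffel symbols `Γ^ε_{μν}` of a metric field `g`. -/
noncomputable def christoffel (g : (Fin 4 → ℝ) → Matrix (Fin 4) (Fin 4) ℝ)
    (ε μ ν : Fin 4) (x : Fin 4 → ℝ) : ℝ :=
  (1 / 2) * ∑ α, (g x)⁻¹ ε α *
    (pd ν (fun y => g y α μ) x + pd μ (fun y => g y α ν) x - pd α (fun y => g y μ ν) x)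

/-- Covariant components `v_μ = g_{μν} v^ν` of a vector field. -/
noncomputable def vlow (g : (Fin 4 → ℝ) → Matrix (Fin 4) (Fin 4) ℝ)
    (v : (Fin 4 → ℝ) → Fin 4 → ℝ) (μ : Fin 4) (x : Fin 4 → ℝ) : ℝ :=
  ∑ ν, g x μ ν * v x ν

/-- Acceleration covector `a_μ = v^ν (∂_ν v_μ − Γ^ε_{μν} v_ε)` of a vector field. -/
noncomputable def accel (g : (Fin 4 → ℝ) → Matrix (Fin 4) (Fin 4) ℝ)
    (v : (Fin 4 → ℝ) → Fin 4 → ℝ) (μ : Fin 4) (x : Fin 4 → ℝ) : ℝ :=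
  ∑ ν, v x ν * (pd ν (vlow g v μ) x - ∑ ε, christoffel g ε μ ν x * vlow g v ε x)

/-- The Gödel metric in cylindrical coordinates (t, r, φ, z) = (x⁰, x¹, x², x³). -/
noncomputable def gGodel (a : ℝ) (x : Fin 4 → ℝ) : Matrix (Fin 4) (Fin 4) ℝ :=
  !![a ^ 2, 0, a ^ 2 * Real.sqrt 2 * Real.sinh (x 1) ^ 2, 0;
     0, -a ^ 2, 0, 0;
     a ^ 2 * Real.sqrt 2 * Real.sinh (x 1) ^ 2, 0,
       a ^ 2 * Real.sinh (x 1) ^ 2 * (Real.sinh (x 1) ^ 2 - 1), 0;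
     0, 0, 0, -a ^ 2]

/-- The circular observer `v^μ = (0, 0, 1/(a sinh r √(sinh²r − 1)), 0)`. -/
noncomputable def vGodel (a : ℝ) (x : Fin 4 → ℝ) : Fin 4 → ℝ :=
  ![0, 0, (a * Real.sinh (x 1) * Real.sqrt (Real.sinh (x 1) ^ 2 - 1))⁻¹, 0]

/-!
The observer `v = w ∂_φ` points along a direction on which neither the metric nor `v` depends.
Contracting `Γ^ε_{μν}` with `v_ε` cancels `g⁻¹` against the lowering by `g`, and in
`v^ν v^α Γ_{αμν}` the terms `∂_ν g_{αμ} − ∂_α g_{μν}` cancel by symmetry, so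
`a_μ = −½ w² ∂_μ g_{φφ} = −½ ∂_μ log g_{φφ}` because `w² g_{φφ} = 1`. With
`g_{φφ} = a² sinh²r (sinh²r − 1)` this is `∂_μ Ψ`.
-/

open Real Matrix

lemma pd_eq_zero_of_forall_add_smul {F : (Fin 4 → ℝ) → ℝ} {x : Fin 4 → ℝ} {μ : Fin 4}
    (hF : ∀ t : ℝ, F (x + t • Pi.single μ 1) = F x) : pd μ F x = 0 := by
  by_cases hd : DifferentiableAt ℝ F x
  · rw [pd, ← hd.lineDeriv_eq_fderiv, lineDeriv]
    simp only [hF, deriv_const]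
  · simp [pd, fderiv_zero_of_not_differentiableAt hd]

lemma pd_comp_apply {f : ℝ → ℝ} {f' : ℝ} {x : Fin 4 → ℝ} {i : Fin 4}
    (hf : HasDerivAt f f' (x i)) (μ : Fin 4) :
    pd μ (fun y => f (y i)) x = (Pi.single i f' : Fin 4 → ℝ) μ := by
  have hcomp : HasFDerivAt (fun y : Fin 4 → ℝ => f (y i))
      (f' • ContinuousLinearMap.proj i) x :=
    hf.comp_hasFDerivAt x
      (ContinuousLinearMap.proj (R := ℝ) (φ := fun _ : Fin 4 => ℝ) i).hasFDerivAt
  rcases eq_or_ne μ i with rfl | hμ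
  · simp [pd, hcomp.fderiv]
  · simp [pd, hcomp.fderiv, hμ, Ne.symm hμ]

section Metric

variable {g : (Fin 4 → ℝ) → Matrix (Fin 4) (Fin 4) ℝ} {x : Fin 4 → ℝ}

lemma sum_christoffel_mul_vlow (hsym : (g x).IsSymm) (hdet : IsUnit (g x).det)
    (v : (Fin 4 → ℝ) → Fin 4 → ℝ) (μ ν : Fin 4) :
    ∑ ε, christoffel g ε μ ν x * vlow g v ε x =
      (1 / 2) * ∑ α, v x α * (pd ν (fun y => g y α μ) x + pd μ (fun y => g y α ν) x
        - pd α (fun y => g y μ ν) x) := by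
  have hraise : (fun ε => vlow g v ε x) ᵥ* (g x)⁻¹ = v x := by
    have hlow : (fun ε => vlow g v ε x) = v x ᵥ* g x := by
      rw [← hsym, vecMul_transpose]; rfl
    rw [hlow, vecMul_vecMul, mul_nonsing_inv _ hdet, vecMul_one]
  simp only [christoffel, Finset.mul_sum, Finset.sum_mul]
  rw [Finset.sum_comm]
  refine Finset.sum_congr rfl fun α _ => ?_
  rw [← congrFun hraise α, vecMul, dotProduct, Finset.sum_mul, Finset.mul_sum]
  refine Finset.sum_congr rfl fun ε _ => ?_
  ring

lemma accel_eq_of_isSymm (hsym : ∀ y, (g y).IsSymm) (hdet : IsUnit (g x).det)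
    (v : (Fin 4 → ℝ) → Fin 4 → ℝ) (μ : Fin 4) :
    accel g v μ x = ∑ ν, v x ν * pd ν (vlow g v μ) x
      - (1 / 2) * ∑ ν, ∑ α, v x ν * v x α * pd μ (fun y => g y α ν) x := by
  have hswap : ∑ ν, ∑ α, v x ν * v x α * pd ν (fun y => g y α μ) x
      = ∑ ν, ∑ α, v x ν * v x α * pd α (fun y => g y μ ν) x := by
    rw [Finset.sum_comm]
    refine Finset.sum_congr rfl fun ν _ => Finset.sum_congr rfl fun α _ => ?_
    have hsymm : (fun y => g y ν μ) = fun y => g y μ ν := funext fun y => (hsym y).apply μ ν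
    rw [hsymm, mul_comm (v x α)]
  simp_rw [accel, mul_sub, Finset.sum_sub_distrib, sum_christoffel_mul_vlow (hsym x) hdet]
  congr 1
  calc ∑ ν, v x ν * (1 / 2 * ∑ α, v x α * (pd ν (fun y => g y α μ) x
          + pd μ (fun y => g y α ν) x - pd α (fun y => g y μ ν) x))
      = 1 / 2 * ∑ ν, ∑ α, (v x ν * v x α * pd ν (fun y => g y α μ) x
          + v x ν * v x α * pd μ (fun y => g y α ν) x
          - v x ν * v x α * pd α (fun y => g y μ ν) x) := by
        rw [Finset.mul_sum]
        refine Finset.sum_congr rfl fun ν _ => ?_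
        rw [Finset.mul_sum, Finset.mul_sum, Finset.mul_sum]
        refine Finset.sum_congr rfl fun α _ => ?_
        ring
    _ = 1 / 2 * ∑ ν, ∑ α, v x ν * v x α * pd μ (fun y => g y α ν) x := by
        simp only [Finset.sum_add_distrib, Finset.sum_sub_distrib, hswap]
        ring

lemma accel_of_eq_single (hsym : ∀ y, (g y).IsSymm) (hdet : IsUnit (g x).det)
    {v : (Fin 4 → ℝ) → Fin 4 → ℝ} {k μ : Fin 4} {w : ℝ} (hv : v x = Pi.single k w)
    (hk : pd k (vlow g v μ) x = 0) :
    accel g v μ x = -(1 / 2) * w ^ 2 * pd μ (fun y => g y k k) x := by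
  rw [accel_eq_of_isSymm hsym hdet, hv]
  simp only [Pi.single_apply, ite_mul, zero_mul, mul_ite, mul_zero, Finset.sum_ite_eq',
    Finset.mem_univ, if_true, hk]
  ring

end Metric

lemma gGodel_isSymm (a : ℝ) (x : Fin 4 → ℝ) : (gGodel a x).IsSymm := by
  ext i j
  fin_cases i <;> fin_cases j <;> simp [gGodel]

lemma det_gGodel (a : ℝ) (x : Fin 4 → ℝ) :
    (gGodel a x).det = -(a ^ 8 * sinh (x 1) ^ 2 * (sinh (x 1) ^ 2 + 1)) := by
  simp [gGodel, det_succ_row_zero, Fin.sum_univ_succ, Fin.succAbove]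
  linear_combination (-a ^ 8 * sinh (x 1) ^ 4) * sq_sqrt (zero_le_two (α := ℝ))

lemma vGodel_eq_single (a : ℝ) (x : Fin 4 → ℝ) :
    vGodel a x = Pi.single 2 (a * sinh (x 1) * √(sinh (x 1) ^ 2 - 1))⁻¹ := by
  ext μ
  fin_cases μ <;> simp [vGodel]

lemma pd_two_vlow_gGodel (a : ℝ) (x : Fin 4 → ℝ) (μ : Fin 4) :
    pd 2 (vlow (gGodel a) (vGodel a) μ) x = 0 :=
  pd_eq_zero_of_forall_add_smul fun t => by simp [vlow, gGodel, vGodel]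

lemma pd_gGodel_two_two (a : ℝ) (x : Fin 4 → ℝ) (μ : Fin 4) :
    pd μ (fun y => gGodel a y 2 2) x
      = (Pi.single 1 (2 * a ^ 2 * sinh (x 1) * cosh (x 1) * (2 * sinh (x 1) ^ 2 - 1)) :
          Fin 4 → ℝ) μ := by
  have hd : HasDerivAt (fun r => a ^ 2 * sinh r ^ 2 * (sinh r ^ 2 - 1))
      (2 * a ^ 2 * sinh (x 1) * cosh (x 1) * (2 * sinh (x 1) ^ 2 - 1)) (x 1) := by
    have hsq : HasDerivAt (fun r => sinh r ^ 2) (2 * sinh (x 1) * cosh (x 1)) (x 1) := by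
      simpa using (hasDerivAt_sinh (x 1)).fun_pow 2
    exact ((hsq.const_mul (a ^ 2)).fun_mul (hsq.sub_const 1)).congr_deriv (by ring)
  exact pd_comp_apply hd μ

lemma isUnit_det_gGodel {a : ℝ} {x : Fin 4 → ℝ} (ha : a ≠ 0) (hs : sinh (x 1) ≠ 0) :
    IsUnit (gGodel a x).det := by
  rw [det_gGodel, isUnit_iff_ne_zero, neg_ne_zero]
  positivity

lemma accel_gGodel {a : ℝ} {x : Fin 4 → ℝ} (ha : a ≠ 0) (hs : 1 < sinh (x 1)) (μ : Fin 4) :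
    accel (gGodel a) (vGodel a) μ x = (Pi.single 1 (-(cosh (x 1) * (2 * sinh (x 1) ^ 2 - 1)) /
      (sinh (x 1) * (sinh (x 1) ^ 2 - 1))) : Fin 4 → ℝ) μ := by
  have hs0 : sinh (x 1) ≠ 0 := by positivity
  have hq : 0 < sinh (x 1) ^ 2 - 1 := by nlinarith
  rw [accel_of_eq_single (gGodel_isSymm a) (isUnit_det_gGodel ha hs0) (vGodel_eq_single a x)
    (pd_two_vlow_gGodel a x μ), pd_gGodel_two_two]
  rcases eq_or_ne μ 1 with rfl | hμ
  · simp only [Pi.single_eq_same]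
    field_simp
    rw [sq_sqrt hq.le]
  · simp [hμ]

lemma pd_neg_log_sinh_mul_sqrt {x : Fin 4 → ℝ} (hs : 1 < sinh (x 1)) (μ : Fin 4) :
    pd μ (fun y => -log (sinh (y 1) * √(sinh (y 1) ^ 2 - 1))) x
      = (Pi.single 1 (-(cosh (x 1) * (2 * sinh (x 1) ^ 2 - 1)) /
          (sinh (x 1) * (sinh (x 1) ^ 2 - 1))) : Fin 4 → ℝ) μ := by
  have hs0 : 0 < sinh (x 1) := by linarith
  have hq : 0 < sinh (x 1) ^ 2 - 1 := by nlinarith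
  have hsq : HasDerivAt (fun r => sinh r ^ 2 - 1) (2 * sinh (x 1) * cosh (x 1)) (x 1) := by
    simpa using ((hasDerivAt_sinh (x 1)).fun_pow 2).sub_const 1
  have hprod := (hasDerivAt_sinh (x 1)).fun_mul (hsq.sqrt hq.ne')
  refine pd_comp_apply ((hprod.log (by positivity)).neg.congr_deriv ?_) μ
  field_simp
  rw [sq_sqrt hq.le]
  ring

lemma sum_gGodel_mul_vGodel_mul_vGodel {a : ℝ} {x : Fin 4 → ℝ} (ha : a ≠ 0)
    (hs : 1 < sinh (x 1)) :
    ∑ μ, ∑ ν, gGodel a x μ ν * vGodel a x μ * vGodel a x ν = 1 := by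
  have hs0 : sinh (x 1) ≠ 0 := by positivity
  have hq : 0 < sinh (x 1) ^ 2 - 1 := by nlinarith
  simp only [vGodel_eq_single, Pi.single_apply, mul_ite, ite_mul, mul_zero, zero_mul,
    Finset.sum_ite_eq', Finset.mem_univ, if_true, gGodel, of_apply, cons_val', cons_val_fin_one,
    cons_val]
  field_simp
  rw [sq_sqrt hq.le]

lemma one_lt_sinh_of_lt {rc r : ℝ} (hrc : 0 < rc) (hrc1 : sinh rc ^ 2 = 1) (h : rc < r) :
    1 < sinh r := by
  have hrc' : sinh rc = 1 := by nlinarith [sinh_pos_iff.2 hrc]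
  exact hrc' ▸ sinh_lt_sinh.2 h

/-- In the acausal region `r > r_c` (where `sinh²r_c = 1`) of Gödel space-time, the circular
observer is unit-normalized and its acceleration is
`(0, −cosh r(2sinh²r−1)/(sinh r(sinh²r−1)), 0, 0) = ∂_μ(−ln(sinh r √(sinh²r−1)))`. -/
theorem godel_circular_observer_acceleration (a rc : ℝ) (ha : 0 < a) (hrc : 0 < rc)
    (hrc1 : Real.sinh rc ^ 2 = 1) :
    ∀ x : Fin 4 → ℝ, rc < x 1 →
      (∑ μ, ∑ ν, gGodel a x μ ν * vGodel a x μ * vGodel a x ν = 1) ∧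
      (∀ μ : Fin 4, accel (gGodel a) (vGodel a) μ x
          = ![0, -(Real.cosh (x 1) * (2 * Real.sinh (x 1) ^ 2 - 1)) /
                (Real.sinh (x 1) * (Real.sinh (x 1) ^ 2 - 1)), 0, 0] μ) ∧
      (∀ μ : Fin 4, accel (gGodel a) (vGodel a) μ x
          = pd μ (fun y =>
              -Real.log (Real.sinh (y 1) * Real.sqrt (Real.sinh (y 1) ^ 2 - 1))) x) := by
  intro x hx
  have hs := one_lt_sinh_of_lt hrc hrc1 hx
  refine ⟨sum_gGodel_mul_vGodel_mul_vGodel ha.ne' hs, fun μ => ?_, fun μ => ?_⟩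
  · rw [accel_gGodel ha.ne' hs]
    fin_cases μ <;> simp
  · rw [accel_gGodel ha.ne' hs, pd_neg_log_sinh_mul_sqrt hs]
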